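/- Assume P_S ≠ 0, P_R ≠ 0 and assumption SP. Then the function (ρ, ρ_R) ↦ α(ρ, ρ_R) is continuous on the set of pairs (ρ, ρ_R) where ρ is a state and ρ_R is a state supported on H_R, and the infimum defining α₁ is attained: there exist a state ρ* with tr(P_S ρ*) = 1 and a state ρ_R* supported on H_R such that α(ρ*, ρ_R*) = α₁. -/

import Mathlib

/-! The only term of `α` that is not polynomial in the entries of `(ρ, ρ_R)` is
`v ln (v / v_R) = v_R · φ(v / v_R)` with `φ(x) = x ln x`, which is continuous wherever
`v_R ≠ 0`; assumption (SP) makes `v_{j,R}(ρ_R) > 0` for every state `ρ_R` supported on `H_R`,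
because a nonzero positive semidefinite `ρ_R = B Bᴴ` with `P_R B = B` has a nonzero column
in `H_R`. The admissible pairs form a compact set (states are closed, with entries bounded by
the trace), nonempty since `P / tr P` is a state supported on the range of a nonzero
projection `P`; so the continuous `α` attains its infimum there. -/

open scoped ComplexOrder Matrix Matrix.Norms.L2Operator

noncomputable section

abbrev Mat (d : ℕ) := Matrix (Fin d) (Fin d) ℂ

/-- A quantum state: positive semidefinite with unit trace. -/
def IsState {d : ℕ} (ρ : Mat d) : Prop := ρ.PosSemidef ∧ ρ.trace = 1

/-- The Lindblad generator `L(X) = -i[H,X] + Σⱼ (Cⱼ X Cⱼ* - ½(Cⱼ*Cⱼ X + X Cⱼ*Cⱼ))`. -/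
def lindblad {d m : ℕ} (H : Mat d) (C : Fin m → Mat d) : Mat d →ₗ[ℂ] Mat d :=
  (-Complex.I) • (LinearMap.mulLeft ℂ H - LinearMap.mulRight ℂ H)
  + ∑ j, ((LinearMap.mulLeft ℂ (C j)).comp (LinearMap.mulRight ℂ (C j)ᴴ)
      - (1/2 : ℂ) • (LinearMap.mulLeft ℂ ((C j)ᴴ * C j) + LinearMap.mulRight ℂ ((C j)ᴴ * C j)))

/-- The exponential of a linear endomorphism of matrix space, computed through its
matrix representation in the standard basis. -/
def expMap {d : ℕ} (f : Mat d →ₗ[ℂ] Mat d) : Mat d →ₗ[ℂ] Mat d :=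
  Matrix.toLin (Matrix.stdBasis ℂ (Fin d) (Fin d)) (Matrix.stdBasis ℂ (Fin d) (Fin d))
    (NormedSpace.exp
      (LinearMap.toMatrix (Matrix.stdBasis ℂ (Fin d) (Fin d)) (Matrix.stdBasis ℂ (Fin d) (Fin d)) f))

/-- The restricted generator `L_S` acting on the `S` block. -/
def lindbladS {d m : ℕ} (H : Mat d) (C : Fin m → Mat d) (Ps : Mat d) : Mat d →ₗ[ℂ] Mat d :=
  lindblad (Ps * H * Ps) (fun j => Ps * C j * Ps)

/-- The reduced generator `L_R` on the `R` block, including the `-½{C_{j,P}* C_{j,P}, ·}` terms. -/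
def lindbladR {d m : ℕ} (H : Mat d) (C : Fin m → Mat d) (Ps : Mat d) : Mat d →ₗ[ℂ] Mat d :=
  lindblad ((1 - Ps) * H * (1 - Ps)) (fun j => (1 - Ps) * C j * (1 - Ps))
  - (1/2 : ℂ) • ∑ j, (LinearMap.mulLeft ℂ ((Ps * C j * (1 - Ps))ᴴ * (Ps * C j * (1 - Ps)))
       + LinearMap.mulRight ℂ ((Ps * C j * (1 - Ps))ᴴ * (Ps * C j * (1 - Ps))))

/-- The invariance block condition: `P_R Cⱼ P_S = 0` for all `j` and
`i P_S H P_R - ½ Σⱼ C_{j,S}* C_{j,P} = 0`. -/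
def BlockInv {d m : ℕ} (H : Mat d) (C : Fin m → Mat d) (Ps : Mat d) : Prop :=
  (∀ j, (1 - Ps) * C j * Ps = 0) ∧
    Complex.I • (Ps * H * (1 - Ps))
      - (1/2 : ℂ) • ∑ j, (Ps * C j * Ps)ᴴ * (Ps * C j * (1 - Ps)) = 0

/-- `H_S` (the range of `Ps`) is invariant in mean. -/
def InvariantMean {d m : ℕ} (H : Mat d) (C : Fin m → Mat d) (Ps : Mat d) : Prop :=
  ∀ ρ₀ : Mat d, IsState ρ₀ → (Ps * ρ₀).trace = 1 →
    ∀ t : ℝ, 0 ≤ t → (Ps * expMap ((t : ℂ) • lindblad H C) ρ₀).trace = 1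

/-- `H_S` (the range of `Ps`) is globally asymptotically stable in mean:
`‖exp(tL)(ρ₀) - P_S exp(tL)(ρ₀) P_S‖ → 0` as `t → ∞`, for every state `ρ₀`. -/
def GASMean {d m : ℕ} (H : Mat d) (C : Fin m → Mat d) (Ps : Mat d) : Prop :=
  ∀ ρ₀ : Mat d, IsState ρ₀ →
    Filter.Tendsto
      (fun t : ℝ =>
        ‖expMap ((t : ℂ) • lindblad H C) ρ₀ - Ps * expMap ((t : ℂ) • lindblad H C) ρ₀ * Ps‖)
      Filter.atTop (nhds 0)

/-- `α₀`: the minimum of `-Re λ` over the eigenvalues `λ` of the restriction of `L_R` to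
`V_R = {X : X = P_R X P_R}`. -/
def alpha0 {d m : ℕ} (H : Mat d) (C : Fin m → Mat d) (Ps : Mat d) : ℝ :=
  sInf {x : ℝ | ∃ (lam : ℂ) (X : Mat d), X ≠ 0 ∧ (1 - Ps) * X * (1 - Ps) = X ∧
    lindbladR H C Ps X = lam • X ∧ x = -lam.re}

/-- A linear map on matrices is positivity improving if `⟨ψ, Φ(φφ*) ψ⟩ > 0` (a strictly
positive real number) for all nonzero vectors `φ, ψ`. -/
def PosImproving {d : ℕ} (Φ : Mat d →ₗ[ℂ] Mat d) : Prop :=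
  ∀ φ ψ : Fin d → ℂ, φ ≠ 0 → ψ ≠ 0 →
    0 < star ψ ⬝ᵥ ((Φ (Matrix.vecMulVec φ (star φ))) *ᵥ ψ)

/-- `r_j(ρ) = tr[(C_j + C_j*) ρ]` (a real number). -/
def rVal {d m : ℕ} (C : Fin m → Mat d) (j : Fin m) (ρ : Mat d) : ℝ :=
  (((C j + (C j)ᴴ) * ρ).trace).re

/-- `v_j(ρ) = tr[C_j ρ C_j*]` (a real number). -/
def vVal {d m : ℕ} (C : Fin m → Mat d) (j : Fin m) (ρ : Mat d) : ℝ :=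
  ((C j * ρ * (C j)ᴴ).trace).re

/-- `r_{j,S}(ρ_S) = tr[(C_{j,S} + C_{j,S}*) ρ_S]`. -/
def rValS {d m : ℕ} (C : Fin m → Mat d) (Ps : Mat d) (j : Fin m) (ρS : Mat d) : ℝ :=
  (((Ps * C j * Ps + (Ps * C j * Ps)ᴴ) * ρS).trace).re

/-- `r_{j,R}(ρ_R) = tr[(C_{j,R} + C_{j,R}*) ρ_R]`. -/
def rValR {d m : ℕ} (C : Fin m → Mat d) (Ps : Mat d) (j : Fin m) (ρR : Mat d) : ℝ :=
  ((((1 - Ps) * C j * (1 - Ps) + ((1 - Ps) * C j * (1 - Ps))ᴴ) * ρR).trace).re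

/-- `v_{j,S}(ρ_S) = tr[C_{j,S}* C_{j,S} ρ_S]`. -/
def vValS {d m : ℕ} (C : Fin m → Mat d) (Ps : Mat d) (j : Fin m) (ρS : Mat d) : ℝ :=
  ((((Ps * C j * Ps)ᴴ * (Ps * C j * Ps)) * ρS).trace).re

/-- `v_{j,R}(ρ_R) = tr[C_{j,R}* C_{j,R} ρ_R]`. -/
def vValR {d m : ℕ} (C : Fin m → Mat d) (Ps : Mat d) (j : Fin m) (ρR : Mat d) : ℝ :=
  (((((1 - Ps) * C j * (1 - Ps))ᴴ * ((1 - Ps) * C j * (1 - Ps))) * ρR).trace).re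

/-- The function `α(ρ, ρ_R)`; indices `j < p` are diffusive, indices `p ≤ j` are jump indices.
The convention `0 · ln 0 = 0` is automatic since `Real.log 0 = 0` in Lean. -/
def alphaFun {d m : ℕ} (C : Fin m → Mat d) (p : ℕ) (Ps : Mat d) (ρ ρR : Mat d) : ℝ :=
  (1/2) * ∑ j ∈ Finset.filter (fun j : Fin m => (j : ℕ) < p) Finset.univ,
      (rVal C j ρ - rValR C Ps j ρR) ^ 2
  + ∑ j ∈ Finset.filter (fun j : Fin m => p ≤ (j : ℕ)) Finset.univ,
      (vValR C Ps j ρR - vVal C j ρ + vVal C j ρ * Real.log (vVal C j ρ / vValR C Ps j ρR))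

/-- `α₁`: the infimum of `α(ρ, ρ_R)` over states `ρ` with `tr(P_S ρ) = 1` and states `ρ_R`
supported on `H_R`. -/
def alpha1 {d m : ℕ} (C : Fin m → Mat d) (p : ℕ) (Ps : Mat d) : ℝ :=
  sInf {a : ℝ | ∃ ρ ρR : Mat d, IsState ρ ∧ (Ps * ρ).trace = 1 ∧ IsState ρR ∧
    (1 - Ps) * ρR * (1 - Ps) = ρR ∧ a = alphaFun C p Ps ρ ρR}

/-- Assumption (SP): `⟨x, C_{j,R}* C_{j,R} x⟩ > 0` for every jump index `j` and every nonzero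
`x` in the range of `P_R`. -/
def AssumpSP {d m : ℕ} (C : Fin m → Mat d) (p : ℕ) (Ps : Mat d) : Prop :=
  ∀ j : Fin m, p ≤ (j : ℕ) → ∀ x : Fin d → ℂ, x ≠ 0 → (1 - Ps) *ᵥ x = x →
    0 < star x ⬝ᵥ (((((1 - Ps) * C j * (1 - Ps))ᴴ * ((1 - Ps) * C j * (1 - Ps)))) *ᵥ x)

/-- Assumption (ND): every state supported on `H_S` and every state supported on `H_R`
are distinguished by some measurement record expectation. -/
def AssumpND {d m : ℕ} (C : Fin m → Mat d) (p : ℕ) (Ps : Mat d) : Prop :=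
  ∀ ρS ρR : Mat d, IsState ρS → Ps * ρS * Ps = ρS → IsState ρR → (1 - Ps) * ρR * (1 - Ps) = ρR →
    ∃ j : Fin m, ((j : ℕ) < p ∧ rValS C Ps j ρS ≠ rValR C Ps j ρR) ∨
                 (p ≤ (j : ℕ) ∧ vValS C Ps j ρS ≠ vValR C Ps j ρR)

open Matrix

theorem IsIdempotentElem.mul_eq_self_of_mul_mul_eq {M : Type*} [Semigroup M] {P a : M}
    (hP : IsIdempotentElem P) (h : P * a * P = a) : P * a = a := by
  rw [← h, ← mul_assoc, ← mul_assoc, hP.eq]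

theorem ContinuousOn.mul_log_div {X : Type*} [TopologicalSpace X] {f g : X → ℝ} {s : Set X}
    (hf : ContinuousOn f s) (hg : ContinuousOn g s) (hg0 : ∀ x ∈ s, g x ≠ 0) :
    ContinuousOn (fun x => f x * Real.log (f x / g x)) s := by
  refine (hg.mul (Real.continuous_mul_log.comp_continuousOn (hf.div hg hg0))).congr
    fun x hx => ?_
  simp only [Pi.mul_apply, Function.comp_apply, Pi.div_apply]
  field_simp [hg0 x hx]

namespace Matrix

theorem PosSemidef.norm_sq_apply_le {n : Type*} {A : Matrix n n ℂ} (hA : A.PosSemidef)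
    (i j : n) : ‖A i j‖ ^ 2 ≤ (A i i).re * (A j j).re := by
  have h := (hA.submatrix ![i, j]).det_nonneg
  rw [det_fin_two] at h
  simp only [submatrix_apply, cons_val_zero, cons_val_one] at h
  rw [← hA.1.apply i j, Complex.star_def, Complex.conj_mul'] at h
  have hii : (A i i).im = 0 := (Complex.le_def.mp hA.diag_nonneg).2.symm
  calc ‖A i j‖ ^ 2 = ‖A j i‖ ^ 2 := by rw [← hA.1.apply i j, norm_star]
    _ ≤ (A i i).re * (A j j).re := by
      simpa [hii, ← Complex.ofReal_pow] using (Complex.le_def.mp h).1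

variable {n : Type*} [Fintype n]

theorem PosSemidef.re_apply_self_le_re_trace {A : Matrix n n ℂ} (hA : A.PosSemidef) (i : n) :
    (A i i).re ≤ A.trace.re := by
  rw [trace, Complex.re_sum]
  exact Finset.single_le_sum (f := fun k => (A k k).re)
    (fun k _ => (Complex.le_def.mp hA.diag_nonneg).1) (Finset.mem_univ i)

theorem PosSemidef.norm_apply_le_re_trace {A : Matrix n n ℂ} (hA : A.PosSemidef) (i j : n) :
    ‖A i j‖ ≤ A.trace.re := by
  have hi := hA.re_apply_self_le_re_trace i
  have hj := hA.re_apply_self_le_re_trace j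
  have hi0 : 0 ≤ (A i i).re := (Complex.le_def.mp hA.diag_nonneg).1
  have hj0 : 0 ≤ (A j j).re := (Complex.le_def.mp hA.diag_nonneg).1
  refine (pow_le_pow_iff_left₀ (norm_nonneg _) (hi0.trans hi) two_ne_zero).mp ?_
  calc ‖A i j‖ ^ 2 ≤ (A i i).re * (A j j).re := hA.norm_sq_apply_le i j
    _ ≤ A.trace.re ^ 2 := by rw [sq]; exact mul_le_mul hi hj hj0 (hi0.trans hi)

theorem isClosed_setOf_posSemidef : IsClosed {A : Matrix n n ℂ | A.PosSemidef} := by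
  have : {A : Matrix n n ℂ | A.PosSemidef}
      = {A | Aᴴ = A} ∩ ⋂ x : n → ℂ, {A | 0 ≤ star x ⬝ᵥ A *ᵥ x} := by
    ext A
    simp [posSemidef_iff_dotProduct_mulVec, IsHermitian]
  rw [this]
  exact (isClosed_eq (by fun_prop) continuous_id).inter
    (isClosed_iInter fun x => isClosed_le continuous_const (by fun_prop))

theorem re_trace_mul_pos_of_mul_eq [DecidableEq n] {Q M ρ : Matrix n n ℂ}
    (hM : ∀ x, x ≠ 0 → Q *ᵥ x = x → 0 < star x ⬝ᵥ M *ᵥ x)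
    (hρ : ρ.PosSemidef) (hρ0 : ρ ≠ 0) (hQρ : Q * ρ = ρ) : 0 < (M * ρ).trace.re := by
  obtain ⟨B, rfl⟩ : ∃ B : Matrix n n ℂ, ρ = B * Bᴴ := by
    open scoped MatrixOrder in
    obtain ⟨A, hA⟩ := CStarAlgebra.nonneg_iff_eq_star_mul_self.mp hρ.nonneg
    exact ⟨Aᴴ, by rw [hA, conjTranspose_conjTranspose, star_eq_conjTranspose]⟩
  have hQB : Q * B = B := by
    have h := (mul_self_mul_conjTranspose_eq_zero B (1 - Q)).mp
      (by rw [sub_mul, one_mul, hQρ, sub_self])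
    rwa [sub_mul, one_mul, sub_eq_zero, eq_comm] at h
  set b : n → n → ℂ := fun k => B *ᵥ Pi.single k 1
  have hdiag : ∀ k, (Bᴴ * M * B).diag k = star (b k) ⬝ᵥ M *ᵥ b k := by
    intro k
    rw [star_mulVec, ← dotProduct_mulVec, mulVec_mulVec, mulVec_mulVec, ← Pi.single_star,
      star_one, single_dotProduct, mulVec_single_one, one_mul]
    rfl
  have hpos : ∀ k, b k ≠ 0 → 0 < (star (b k) ⬝ᵥ M *ᵥ b k).re := fun k hk =>
    (Complex.lt_def.mp (hM _ hk (by simp only [b, mulVec_mulVec, hQB]))).1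
  obtain ⟨k, hk⟩ : ∃ k, b k ≠ 0 := by
    by_contra! h
    refine hρ0 ?_
    have hB : B = 0 := by
      ext i l
      simpa [b] using congrFun (h l) i
    simp [hB]
  rw [← Matrix.mul_assoc, trace_mul_cycle, trace, Complex.re_sum]
  refine Finset.sum_pos' (fun i _ => ?_) ⟨k, Finset.mem_univ k, hdiag k ▸ hpos k hk⟩
  rw [hdiag i]
  by_cases hbi : b i = 0
  · simp [hbi]
  · exact (hpos i hbi).le

end Matrix

theorem IsState.ne_zero {d : ℕ} {ρ : Mat d} (hρ : IsState ρ) : ρ ≠ 0 := by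
  rintro rfl
  simpa using hρ.2

theorem isCompact_setOf_isState {d : ℕ} : IsCompact {ρ : Mat d | IsState ρ} := by
  have hclosed : IsClosed {ρ : Mat d | IsState ρ} :=
    isClosed_setOf_posSemidef.inter (isClosed_eq (by fun_prop) continuous_const)
  refine (isCompact_univ_pi fun _ => isCompact_univ_pi fun _ =>
    isCompact_closedBall (0 : ℂ) 1).of_isClosed_subset hclosed ?_
  intro ρ hρ i _ j _
  simpa [hρ.2] using hρ.1.norm_apply_le_re_trace i j

theorem exists_isState_of_isStarProjection {d : ℕ} {P : Mat d} (hP : IsStarProjection P)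
    (hP0 : P ≠ 0) : ∃ ρ, IsState ρ ∧ P * ρ * P = ρ := by
  have hpsd : P.PosSemidef := by
    have h := posSemidef_conjTranspose_mul_self P
    rwa [show Pᴴ = P from hP.isSelfAdjoint, hP.isIdempotentElem.eq] at h
  have htr : P.trace ≠ 0 := hpsd.trace_eq_zero_iff.not.mpr hP0
  refine ⟨P.trace⁻¹ • P, ⟨hpsd.smul (inv_nonneg_of_nonneg hpsd.trace_nonneg), ?_⟩, ?_⟩
  · rw [trace_smul, smul_eq_mul, inv_mul_cancel₀ htr]
  · rw [Matrix.mul_smul, Matrix.smul_mul, hP.isIdempotentElem.eq, hP.isIdempotentElem.eq]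

theorem vValR_pos {d m : ℕ} {C : Fin m → Mat d} {p : ℕ} {Ps : Mat d} (hPs : IsIdempotentElem Ps)
    (hSP : AssumpSP C p Ps) {j : Fin m} (hj : p ≤ (j : ℕ)) {ρR : Mat d} (hρR : IsState ρR)
    (hsupp : (1 - Ps) * ρR * (1 - Ps) = ρR) : 0 < vValR C Ps j ρR :=
  re_trace_mul_pos_of_mul_eq (hSP j hj) hρR.1 hρR.ne_zero
    (hPs.one_sub.mul_eq_self_of_mul_mul_eq hsupp)

theorem continuousOn_alphaFun {d m : ℕ} (C : Fin m → Mat d) (p : ℕ) (Ps : Mat d)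
    {s : Set (Mat d × Mat d)} (hs : ∀ q ∈ s, ∀ j : Fin m, p ≤ (j : ℕ) → vValR C Ps j q.2 ≠ 0) :
    ContinuousOn (fun q : Mat d × Mat d => alphaFun C p Ps q.1 q.2) s := by
  refine ContinuousOn.add (Continuous.continuousOn (by unfold rVal rValR; fun_prop))
    (continuousOn_finsetSum _ fun j hj => ?_)
  have hv : Continuous fun q : Mat d × Mat d => vVal C j q.1 := by unfold vVal; fun_prop
  have hvR : Continuous fun q : Mat d × Mat d => vValR C Ps j q.2 := by unfold vValR; fun_prop
  exact (hvR.sub hv).continuousOn.add <| hv.continuousOn.mul_log_div hvR.continuousOn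
    fun q hq => hs q hq j (Finset.mem_filter.mp hj).2

theorem stmt17_general {d m : ℕ} (C : Fin m → Mat d) (p : ℕ)
    (Ps : Mat d) (hPs : Psᴴ = Ps) (hPs2 : Ps * Ps = Ps)
    (hPsne : Ps ≠ 0) (hPr : (1 : Mat d) - Ps ≠ 0)
    (hSP : AssumpSP C p Ps) :
    ContinuousOn (fun q : Mat d × Mat d => alphaFun C p Ps q.1 q.2)
      {q : Mat d × Mat d | IsState q.1 ∧ IsState q.2 ∧
        ((1 : Mat d) - Ps) * q.2 * ((1 : Mat d) - Ps) = q.2} ∧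
    ∃ ρ ρR : Mat d, IsState ρ ∧ (Ps * ρ).trace = 1 ∧ IsState ρR ∧
      ((1 : Mat d) - Ps) * ρR * ((1 : Mat d) - Ps) = ρR ∧
      alphaFun C p Ps ρ ρR = alpha1 C p Ps := by
  have hcont : ContinuousOn (fun q : Mat d × Mat d => alphaFun C p Ps q.1 q.2)
      {q | IsState q.2 ∧ (1 - Ps) * q.2 * (1 - Ps) = q.2} :=
    continuousOn_alphaFun C p Ps fun q hq j hj => (vValR_pos hPs2 hSP hj hq.1 hq.2).ne'
  refine ⟨hcont.mono fun q hq => hq.2, ?_⟩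
  have hproj : IsStarProjection Ps := ⟨hPs2, hPs⟩
  set K := {ρ : Mat d | IsState ρ ∧ (Ps * ρ).trace = 1} ×ˢ
    {ρR : Mat d | IsState ρR ∧ (1 - Ps) * ρR * (1 - Ps) = ρR}
  have hK : IsCompact K :=
    (isCompact_setOf_isState.inter_right (isClosed_eq (by fun_prop) continuous_const)).prod
      (isCompact_setOf_isState.inter_right (isClosed_eq (by fun_prop) continuous_id))
  obtain ⟨ρS, hρS, hρSsupp⟩ := exists_isState_of_isStarProjection hproj hPsne
  obtain ⟨ρR, hρR⟩ := exists_isState_of_isStarProjection hproj.one_sub hPr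
  have hKne : K.Nonempty :=
    ⟨(ρS, ρR),
      ⟨hρS, by rw [hproj.isIdempotentElem.mul_eq_self_of_mul_mul_eq hρSsupp, hρS.2]⟩, hρR⟩
  obtain ⟨q, ⟨hq1, hq2⟩, hq⟩ :=
    (hK.image_of_continuousOn (hcont.mono fun q hq => hq.2)).sInf_mem (hKne.image _)
  refine ⟨q.1, q.2, hq1.1, hq1.2, hq2.1, hq2.2, hq.trans ?_⟩
  unfold alpha1
  congr 1
  ext a
  simp [K, eq_comm, and_assoc]

/-- Under assumption (SP) (with `P_S ≠ 0`, `P_R ≠ 0`), the function `α` is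
continuous on the pairs of a state and a state supported on `H_R`, and the infimum defining
`α₁` is attained. -/
theorem stmt17 {d m : ℕ} (hd : 1 ≤ d) (C : Fin m → Mat d) (p : ℕ) (hp : p ≤ m)
    (Ps : Mat d) (hPs : Psᴴ = Ps) (hPs2 : Ps * Ps = Ps)
    (hPsne : Ps ≠ 0) (hPr : (1 : Mat d) - Ps ≠ 0)
    (hSP : AssumpSP C p Ps) :
    ContinuousOn (fun q : Mat d × Mat d => alphaFun C p Ps q.1 q.2)
      {q : Mat d × Mat d | IsState q.1 ∧ IsState q.2 ∧
        ((1 : Mat d) - Ps) * q.2 * ((1 : Mat d) - Ps) = q.2} ∧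
    ∃ ρ ρR : Mat d, IsState ρ ∧ (Ps * ρ).trace = 1 ∧ IsState ρR ∧
      ((1 : Mat d) - Ps) * ρR * ((1 : Mat d) - Ps) = ρR ∧
      alphaFun C p Ps ρ ρR = alpha1 C p Ps :=
  stmt17_general C p Ps hPs hPs2 hPsne hPr hSP

end
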